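/- arXiv:1501.01292 — 4 statements merged into one kernel-verified Lean document; each statement's English description precedes it below -/
import Mathlib

section
/- For nonnegative reals a, b, c and any α, β ∈ [0,1], one has min(a, b + c) ≤ a^α · b^(1-α) + a^β · c^(1-β). -/
lemma min_le_rpow_mul (x y α : ℝ) (hx : 0 ≤ x) (hy : 0 ≤ y)
    (h0 : 0 ≤ α) (h1 : α ≤ 1) : min x y ≤ x ^ α * y ^ (1 - α) := by
  set m := min x y with hm
  have hm0 : 0 ≤ m := le_min hx hy
  rcases eq_or_lt_of_le hm0 with h | h
  · rw [← h]
    positivity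
  · have hmx : m ≤ x := min_le_left _ _
    have hmy : m ≤ y := min_le_right _ _
    calc m = m ^ α * m ^ (1 - α) := by
            rw [← Real.rpow_add h, add_sub_cancel, Real.rpow_one]
      _ ≤ x ^ α * y ^ (1 - α) := by
            apply mul_le_mul (Real.rpow_le_rpow hm0 hmx h0)
              (Real.rpow_le_rpow hm0 hmy (by linarith)) (by positivity) (by positivity)

theorem stmt_0 (a b c α β : ℝ) (ha : 0 ≤ a) (hb : 0 ≤ b) (hc : 0 ≤ c)
    (hα : α ∈ Set.Icc (0:ℝ) 1) (hβ : β ∈ Set.Icc (0:ℝ) 1) :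
    min a (b + c) ≤ a ^ α * b ^ (1 - α) + a ^ β * c ^ (1 - β) := by
  obtain ⟨hα0, hα1⟩ := hα
  obtain ⟨hβ0, hβ1⟩ := hβ
  have h1 := min_le_rpow_mul a b α ha hb hα0 hα1
  have h2 := min_le_rpow_mul a c β ha hc hβ0 hβ1
  have key : min a (b + c) ≤ min a b + min a c := by
    rcases le_total a b with h | h <;> rcases le_total a c with h' | h' <;>
      simp [min_def] <;> split_ifs <;> linarith
  linarith
end

section
/- Let α = 3 - 8/√15. Then 1/3 ≤ α ≤ 1, and the maximum over λ ∈ [0,1] of -(α/2)(λ-1)² - (1-α)(λ² - 1 - (1/4)(λ-1)² + 1/4) equals -(31/2 - 4√15), and for every other α' ∈ [1/3,1] the corresponding maximum is at least -(31/2 - 4√15). -/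
theorem stmt_4 (α : ℝ) (hα : α = 3 - 8 / Real.sqrt 15) :
    α ∈ Set.Icc (1/3 : ℝ) 1 ∧
    IsGreatest ((fun lam : ℝ =>
        -(α / 2) * (lam - 1) ^ 2 - (1 - α) * (lam ^ 2 - 1 - (1/4) * (lam - 1) ^ 2 + 1/4))
        '' Set.Icc (0:ℝ) 1)
      (-(31/2 - 4 * Real.sqrt 15)) ∧
    ∀ α' ∈ Set.Icc (1/3 : ℝ) 1, ∀ M : ℝ,
      IsGreatest ((fun lam : ℝ =>
          -(α' / 2) * (lam - 1) ^ 2 - (1 - α') * (lam ^ 2 - 1 - (1/4) * (lam - 1) ^ 2 + 1/4))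
          '' Set.Icc (0:ℝ) 1) M →
      -(31/2 - 4 * Real.sqrt 15) ≤ M := by
  have hs : Real.sqrt 15 ^ 2 = 15 := Real.sq_sqrt (by norm_num)
  have hs0 : (0:ℝ) ≤ Real.sqrt 15 := Real.sqrt_nonneg 15
  have hs3 : (3:ℝ) < Real.sqrt 15 := by nlinarith
  have hs4 : Real.sqrt 15 < 4 := by nlinarith
  have hspos : (0:ℝ) < Real.sqrt 15 := by linarith
  have hsne : Real.sqrt 15 ≠ 0 := ne_of_gt hspos
  have hdiv1 : 8 / Real.sqrt 15 ≤ 8/3 := by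
    rw [div_le_div_iff₀ hspos (by norm_num)]; nlinarith
  have hdiv2 : 2 < 8 / Real.sqrt 15 := by
    rw [lt_div_iff₀ hspos]; nlinarith
  refine ⟨⟨by rw [hα]; linarith, by rw [hα]; linarith⟩, ⟨?_, ?_⟩, ?_⟩
  · refine ⟨Real.sqrt 15 - 3, ⟨by linarith, by linarith⟩, ?_⟩
    rw [hα]
    field_simp
    ring_nf
    nlinarith [hs]
  · rintro y ⟨lam, hlam, rfl⟩
    simp only
    rw [hα]
    have key : Real.sqrt 15 * ((4*Real.sqrt 15 - 31/2) -
        (-((3 - 8 / Real.sqrt 15) / 2) * (lam - 1) ^ 2 - (1 - (3 - 8 / Real.sqrt 15)) * (lam ^ 2 - 1 - (1/4) * (lam - 1) ^ 2 + 1/4)))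
        = 2 * (lam - Real.sqrt 15 + 3)^2 := by
      field_simp
      ring_nf
      nlinarith [hs]
    nlinarith [sq_nonneg (lam - Real.sqrt 15 + 3), key]
  · rintro α' ⟨h1, h2⟩ M hM
    have hd : (0:ℝ) < 3 - α' := by linarith
    set t : ℝ := (3*α' - 1) / (3 - α') with ht
    have ht0 : 0 ≤ t := div_nonneg (by linarith) (le_of_lt hd)
    have ht1 : t ≤ 1 := by rw [div_le_one hd]; linarith
    have hft := hM.2 ⟨t, ⟨ht0, ht1⟩, rfl⟩
    simp only at hft
    have htd : t * (3 - α') = 3*α' - 1 := by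
      rw [ht]; field_simp
    have key2 : 4*(3-α')^2 * ((-(α' / 2) * (t - 1) ^ 2 - (1 - α') * (t ^ 2 - 1 - (1/4) * (t - 1) ^ 2 + 1/4)) - (4*Real.sqrt 15 - 31/2))
        = (3-α') * (15 * (α' - 3 + 8*Real.sqrt 15/15)^2) := by
      linear_combination (-(3-α')^2*t + (3-α')*(3*α'-1)) * htd + (-(64/15)*(3-α')) * hs
    nlinarith [key2, mul_nonneg hd.le (sq_nonneg (α' - 3 + 8*Real.sqrt 15/15)), mul_pos hd hd]
end

section
/- For X ≥ 2, Σ_{n ≤ X} d(n²)² ≪ X (log X)^8, where d denotes the number-of-divisors function; precisely, there is an absolute constant C such that Σ_{n ≤ X} d(n²)² ≤ C · X · (log X)^8 for all X ≥ 2. -/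
/-!
The function `n ↦ d(n²)²` is multiplicative and equals `(2k + 1)²` at `p ^ k`, while the
9-fold divisor function `d₉ = ζ⁹` equals `(k + 8).choose 8 ≥ (2k + 1)²` there; hence
`d(n²)² ≤ d₉(n)`. Writing `ζ^(k+2) = ζ * ζ^(k+1)` and summing over the first factor gives
`∑_{n ≤ N} ζ^(k+1)(n) ≤ N · H_N ^ k` by induction on `k`, and `H_N ≤ 1 + log N`.
-/

open Finset ArithmeticFunction
open scoped ArithmeticFunction.zeta

lemma harmonic_mono : Monotone harmonic :=
  monotone_nat_of_le_succ fun n => by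
    rw [harmonic_succ]
    simp only [le_add_iff_nonneg_right]
    positivity

lemma harmonic_nonneg (N : ℕ) : 0 ≤ harmonic N :=
  harmonic_zero ▸ harmonic_mono (Nat.zero_le N)

lemma harmonic_eq_sum_Ioc (N : ℕ) : harmonic N = ∑ d ∈ Ioc 0 N, (d : ℚ)⁻¹ := by
  rw [harmonic_eq_sum_Icc]; rfl

lemma sum_Ioc_zeta_pow_le (k N : ℕ) :
    ∑ n ∈ Ioc 0 N, ((ζ ^ (k + 1) : ArithmeticFunction ℕ) n : ℚ) ≤ N * harmonic N ^ k := by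
  induction k generalizing N with
  | zero => simpa using congrArg (Nat.cast (R := ℚ)) (sum_Ioc_zeta N) |>.le
  | succ k ih =>
    have hsplit := sum_Ioc_mul_eq_sum_sum ζ (ζ ^ (k + 1)) N
    rw [← pow_succ'] at hsplit
    calc ∑ n ∈ Ioc 0 N, ((ζ ^ (k + 2) : ArithmeticFunction ℕ) n : ℚ)
        = ∑ d ∈ Ioc 0 N, ∑ m ∈ Ioc 0 (N / d), ((ζ ^ (k + 1) : ArithmeticFunction ℕ) m : ℚ) := by
          rw [← Nat.cast_sum, hsplit, Nat.cast_sum]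
          refine sum_congr rfl fun d hd => ?_
          rw [zeta_apply_ne (mem_Ioc.1 hd).1.ne', one_mul, Nat.cast_sum]
      _ ≤ ∑ d ∈ Ioc 0 N, (N / d : ℚ) * harmonic N ^ k := by
          refine sum_le_sum fun d _ => (ih (N / d)).trans ?_
          have := harmonic_nonneg (N / d)
          gcongr
          · exact Nat.cast_div_le
          · exact harmonic_mono (Nat.div_le_self N d)
      _ = N * harmonic N ^ (k + 1) := by
          rw [pow_succ, harmonic_eq_sum_Ioc, mul_sum, mul_sum]
          refine sum_congr rfl fun d _ => ?_
          ring

lemma zeta_pow_apply_prime_pow {p : ℕ} (hp : p.Prime) (j k : ℕ) :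
    (ζ ^ (j + 1) : ArithmeticFunction ℕ) (p ^ k) = (k + j).choose j := by
  induction j generalizing k with
  | zero => simp [zeta_apply_ne (pow_ne_zero _ hp.ne_zero)]
  | succ j ih =>
    rw [pow_succ, mul_zeta_apply, Nat.sum_divisors_prime_pow hp]
    simp only [ih]
    rw [Nat.sum_range_add_choose k j, Nat.add_assoc]

lemma sq_two_mul_add_one_le_choose (k : ℕ) : (2 * k + 1) ^ 2 ≤ (k + 8).choose 8 := by
  induction k with
  | zero => simp
  | succ k ih =>
    have hrec : (k + 8).choose 8 * (k + 9) = (k + 9).choose 8 * (k + 1) := by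
      simpa using Nat.choose_mul_succ_eq (k + 8) 8
    refine Nat.le_of_mul_le_mul_right (c := k + 1) ?_ k.succ_pos
    calc (2 * (k + 1) + 1) ^ 2 * (k + 1) ≤ (2 * k + 1) ^ 2 * (k + 9) := by nlinarith
      _ ≤ (k + 8).choose 8 * (k + 9) := by gcongr
      _ = (k + 1 + 8).choose 8 * (k + 1) := hrec

lemma card_divisors_sq {n : ℕ} (hn : n ≠ 0) :
    #(n ^ 2).divisors = ∏ p ∈ n.primeFactors, (2 * n.factorization p + 1) := by
  rw [Nat.card_divisors (pow_ne_zero 2 hn), Nat.primeFactors_pow n two_ne_zero]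
  simp [Nat.factorization_pow]

lemma sq_card_divisors_sq_le_zeta_pow (n : ℕ) :
    #(n ^ 2).divisors ^ 2 ≤ (ζ ^ 9 : ArithmeticFunction ℕ) n := by
  rcases eq_or_ne n 0 with rfl | hn
  · simp
  rw [card_divisors_sq hn, ← prod_pow,
    (isMultiplicative_zeta.pow (k := 8 + 1)).multiplicative_factorization _ hn, Finsupp.prod,
    Nat.support_factorization]
  refine prod_le_prod' fun p hp => ?_
  rw [zeta_pow_apply_prime_pow (Nat.prime_of_mem_primeFactors hp)]
  exact sq_two_mul_add_one_le_choose _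

lemma harmonic_floor_le_mul_log {X : ℝ} (hX : 2 ≤ X) :
    (harmonic ⌊X⌋₊ : ℝ) ≤ 5 / 2 * Real.log X := by
  have hlog : 2 / 3 ≤ Real.log X :=
    (Real.log_two_gt_d9.trans_le (Real.log_le_log two_pos hX)).le.trans' (by norm_num)
  linarith [harmonic_floor_le_one_add_log X (by linarith)]

theorem stmt_10 :
    ∃ C : ℝ, 0 < C ∧ ∀ X : ℝ, 2 ≤ X →
      ∑ n ∈ Finset.Icc 1 ⌊X⌋₊, ((Nat.divisors (n ^ 2)).card : ℝ) ^ 2 ≤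
        C * X * Real.log X ^ 8 := by
  refine ⟨(5 / 2) ^ 8, by positivity, fun X hX => ?_⟩
  set N := ⌊X⌋₊
  have : (0 : ℝ) ≤ harmonic N := by exact_mod_cast harmonic_nonneg N
  calc ∑ n ∈ Icc 1 N, ((n ^ 2).divisors.card : ℝ) ^ 2
      ≤ ∑ n ∈ Ioc 0 N, ((ζ ^ 9 : ArithmeticFunction ℕ) n : ℝ) := -- `Icc 1 N = Ioc 0 N` by `rfl`
        sum_le_sum fun n _ => by exact_mod_cast sq_card_divisors_sq_le_zeta_pow n
    _ ≤ N * (harmonic N : ℝ) ^ 8 := by exact_mod_cast sum_Ioc_zeta_pow_le 8 N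
    _ ≤ X * (5 / 2 * Real.log X) ^ 8 := by
        gcongr
        · exact Nat.floor_le (by linarith)
        · exact harmonic_floor_le_mul_log hX
    _ = (5 / 2) ^ 8 * X * Real.log X ^ 8 := by ring
end

section
/- Let n ≥ 0 be an integer, ε > 0, η ∈ (0,1), and let ρ₁, …, ρₙ ∈ ℂ. Define S = {z ∈ ℂ : ∏_{j=1}^n |z - ρⱼ| < (ηε/e)^n}. Then by Cartan's lemma applied with H = ηε, the set S is contained in a union of disks with radii summing to at most 2ηε, and hence the Lebesgue measure of S is at most 4π η² ε². -/
open Metric MeasureTheory Finset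
open scoped Nat

/-! Cartan's lemma by the greedy construction. With `L = H / n`, repeatedly take the largest `p`
for which some closed disk of radius `p * L` contains at least `p` of the remaining points, and
remove those points. Maximality of each choice shows that outside the doubled disks (radii
`2 * p * L`, in total `2 * n * L = 2 * H`) at most `k` of the points lie within `(k + 1) * L`,
so that the ordered distances are at least `L, 2 * L, …, n * L` and the product is at least
`n! * L ^ n ≥ (H / e) ^ n`. The bound on the measure is then `π (∑ r)² ≤ π (2 η ε)²`. -/

section Cartan

variable {X ι : Type*} [PseudoMetricSpace X] (ρ : ι → X) {L : ℝ}

lemma exists_maximal_heavy_closedBall (hL : 0 ≤ L) {T : Finset ι} (hT : T.Nonempty) :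
    ∃ (c : X) (p : ℕ), 1 ≤ p ∧ #{j ∈ T | dist (ρ j) c ≤ p * L} = p ∧
      ∀ (z : X) (q : ℕ), q ≤ #{j ∈ T | dist (ρ j) z ≤ q * L} → q ≤ p := by
  classical
  set Q : ℕ → Prop := fun q => ∃ c, q ≤ #{j ∈ T | dist (ρ j) c ≤ q * L}
  have hQ_le : ∀ q, Q q → q ≤ #T := fun q ⟨_, hc⟩ => hc.trans (card_filter_le _ _)
  obtain ⟨j₀, hj₀⟩ := hT
  have hQ_one : Q 1 :=
    ⟨ρ j₀, one_le_card.mpr ⟨j₀, mem_filter.mpr ⟨hj₀, by simpa using hL⟩⟩⟩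
  set p := Nat.findGreatest Q #T
  have hmax : ∀ q, Q q → q ≤ p := fun q hq => Nat.le_findGreatest (hQ_le q hq) hq
  obtain ⟨c, hc⟩ : Q p := Nat.findGreatest_spec (hQ_le 1 hQ_one) hQ_one
  refine ⟨c, p, hmax 1 hQ_one, le_antisymm (hmax _ ⟨c, card_le_card fun j hj => ?_⟩) hc,
    fun z q hq => hmax q ⟨z, hq⟩⟩
  simp only [mem_filter] at hj ⊢
  exact ⟨hj.1, hj.2.trans (mul_le_mul_of_nonneg_right (by exact_mod_cast hc) hL)⟩

theorem exists_cartan_cover [DecidableEq ι] (hL : 0 ≤ L) (T : Finset ι) :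
    ∃ (m : ℕ) (c : Fin m → X) (p : Fin m → ℕ), ∑ i, p i = #T ∧
      ∀ z, (∀ i, 2 * p i * L ≤ dist z (c i)) →
        ∀ k : ℕ, #{j ∈ T | dist z (ρ j) < (k + 1) * L} ≤ k := by
  induction T using Finset.strongInduction with
  | H T ih =>
  rcases T.eq_empty_or_nonempty with rfl | hT
  · exact ⟨0, Fin.elim0, Fin.elim0, by simp, fun _ _ _ => by simp⟩
  obtain ⟨c₀, p₀, hp₀, hD, hmax⟩ := exists_maximal_heavy_closedBall ρ hL hT
  set D := {j ∈ T | dist (ρ j) c₀ ≤ p₀ * L}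
  have hDT : D ⊆ T := filter_subset _ _
  obtain ⟨m, c, p, hsum, hcount⟩ :=
    ih (T \ D) (sdiff_ssubset hDT (card_pos.mp (hD ▸ hp₀)))
  refine ⟨m + 1, Fin.cons c₀ c, Fin.cons p₀ p, ?_, fun z hz k => ?_⟩
  · have := hD ▸ card_le_card hDT
    rw [Fin.sum_cons, hsum, card_sdiff_of_subset hDT, hD]
    omega
  rcases le_or_gt (k + 1) p₀ with hk | hk
  · -- the points of `D` are within `p₀ * L` of `c₀`, hence at least `p₀ * L` away from `z`
    have hz₀ : 2 * p₀ * L ≤ dist z c₀ := by simpa using hz 0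
    have hkL : (k + 1) * L ≤ p₀ * L := mul_le_mul_of_nonneg_right (by exact_mod_cast hk) hL
    refine (card_le_card fun j hj => ?_).trans (hcount z (fun i => by simpa using hz i.succ) k)
    simp only [D, mem_filter, mem_sdiff] at hj ⊢
    refine ⟨⟨hj.1, fun hjD => ?_⟩, hj.2⟩
    linarith [dist_triangle z (ρ j) c₀, hjD.2]
  · -- `k + 1 > p₀` points within `(k + 1) * L` of `z` would contradict the maximality of `p₀`
    by_contra! h
    have := hmax z (k + 1) (h.trans_le (card_le_card fun j hj => ?_))
    · omega
    simp only [mem_filter, dist_comm (ρ j) z] at hj ⊢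
    exact ⟨hj.1, by exact_mod_cast hj.2.le⟩

lemma factorial_mul_pow_le_prod {n : ℕ} (hL : 0 ≤ L) (f : Fin n → ℝ)
    (hcount : ∀ k : ℕ, #{j | f j < (k + 1) * L} ≤ k) :
    n ! * L ^ n ≤ ∏ j, f j := by
  set σ := Tuple.sort f
  -- the `i + 1` smallest values cannot all be `< (i + 1) * L`
  have hsorted : ∀ i : Fin n, (i + 1 : ℕ) * L ≤ f (σ i) := by
    intro i
    by_contra! h
    have hsub : (Iic i).image σ ⊆ ({j | f j < (i + 1 : ℕ) * L} : Finset (Fin n)) := by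
      intro j hj
      obtain ⟨j', hj', rfl⟩ := mem_image.mp hj
      simp only [mem_filter, mem_univ, true_and]
      exact (Tuple.monotone_sort f (mem_Iic.mp hj')).trans_lt h
    have := (card_le_card hsub).trans (by exact_mod_cast hcount i)
    rw [card_image_of_injective _ σ.injective, Fin.card_Iic] at this
    omega
  calc (n ! : ℝ) * L ^ n = ∏ i : Fin n, (i + 1 : ℕ) * L := by
        rw [prod_mul_distrib, prod_const, card_univ, Fintype.card_fin,
          Fin.prod_univ_eq_prod_range (fun i => ((i + 1 : ℕ) : ℝ)), ← Nat.cast_prod,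
          prod_range_add_one_eq_factorial]
    _ ≤ ∏ i, f (σ i) := prod_le_prod (fun i _ => by positivity) fun i _ => hsorted i
    _ = ∏ j, f j := Equiv.prod_comp σ f

lemma pow_div_exp_le_factorial (n : ℕ) : (n / Real.exp 1) ^ n ≤ n ! := by
  have h := Real.pow_div_factorial_le_exp (n : ℝ) n.cast_nonneg n
  rw [div_le_iff₀ (by positivity)] at h
  rw [div_pow, Real.exp_one_pow, div_le_iff₀ (by positivity)]
  linarith

lemma pow_div_exp_le_factorial_mul_pow (n : ℕ) {H : ℝ} (hH : 0 ≤ H) :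
    (H / Real.exp 1) ^ n ≤ n ! * (H / n) ^ n := by
  rcases n.eq_zero_or_pos with rfl | hn
  · simp
  calc (H / Real.exp 1) ^ n = (n / Real.exp 1) ^ n * (H / n) ^ n := by
        rw [← mul_pow]
        field_simp
    _ ≤ n ! * (H / n) ^ n := by
        gcongr
        exact pow_div_exp_le_factorial n

theorem cartan_lemma {n : ℕ} (ρ : Fin n → X) {H : ℝ} (hH : 0 ≤ H) :
    ∃ (m : ℕ) (c : Fin m → X) (r : Fin m → ℝ), (∀ i, 0 ≤ r i) ∧ ∑ i, r i ≤ 2 * H ∧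
      ∀ z ∉ ⋃ i, ball (c i) (r i), (H / Real.exp 1) ^ n ≤ ∏ j, dist z (ρ j) := by
  have hL : 0 ≤ H / n := by positivity
  obtain ⟨m, c, p, hsum, hcount⟩ := exists_cartan_cover ρ hL univ
  refine ⟨m, c, fun i => 2 * p i * (H / n), fun i => by positivity, ?_, fun z hz => ?_⟩
  · calc ∑ i, 2 * (p i : ℝ) * (H / n) = 2 * (H / n * n) := by
          rw [← sum_mul, ← mul_sum, ← Nat.cast_sum, hsum, card_univ, Fintype.card_fin]
          ring
      _ ≤ 2 * H := by
          rcases eq_or_ne (n : ℝ) 0 with hn | hn <;> simp [hn, hH]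
  · simp only [Set.mem_iUnion, mem_ball, not_exists, not_lt] at hz
    calc (H / Real.exp 1) ^ n ≤ n ! * (H / n) ^ n := pow_div_exp_le_factorial_mul_pow n hH
      _ ≤ ∏ j, dist z (ρ j) := factorial_mul_pow_le_prod hL _ (by simpa using hcount z hz)

end Cartan

lemma volume_iUnion_ball_le {ι : Type*} [Fintype ι] (c : ι → ℂ) (r : ι → ℝ)
    (hr : ∀ i, 0 ≤ r i) :
    volume (⋃ i, ball (c i) (r i)) ≤ ENNReal.ofReal (Real.pi * (∑ i, r i) ^ 2) := by
  calc volume (⋃ i, ball (c i) (r i)) ≤ ∑ i, volume (ball (c i) (r i)) :=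
        measure_iUnion_fintype_le _ _
    _ = ENNReal.ofReal (Real.pi * ∑ i, r i ^ 2) := by
        rw [mul_sum, ENNReal.ofReal_sum_of_nonneg (fun i _ => by positivity)]
        refine sum_congr rfl fun i _ => ?_
        rw [Complex.volume_ball, ← ENNReal.ofReal_pow (hr i), mul_comm,
          ENNReal.ofReal_mul Real.pi_pos.le, ← NNReal.coe_real_pi, ENNReal.ofReal_coe_nnreal]
    _ ≤ ENNReal.ofReal (Real.pi * (∑ i, r i) ^ 2) := by
        gcongr
        exact sum_sq_le_sq_sum_of_nonneg fun i _ => hr i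

theorem stmt_19 (n : ℕ) (ε η : ℝ) (hε : 0 < ε) (hη : η ∈ Set.Ioo (0 : ℝ) 1)
    (ρ : Fin n → ℂ) :
    (∃ (m : ℕ) (c : Fin m → ℂ) (r : Fin m → ℝ),
      (∀ j, 0 ≤ r j) ∧ (∑ j, r j) ≤ 2 * η * ε ∧
      {z : ℂ | ∏ j, ‖z - ρ j‖ < (η * ε / Real.exp 1) ^ n} ⊆
        ⋃ j, ball (c j) (r j)) ∧
    volume {z : ℂ | ∏ j, ‖z - ρ j‖ < (η * ε / Real.exp 1) ^ n} ≤
      ENNReal.ofReal (4 * Real.pi * η ^ 2 * ε ^ 2) := by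
  obtain ⟨m, c, r, hr, hsum, hfar⟩ := cartan_lemma ρ (mul_pos hη.1 hε).le
  have hS : {z : ℂ | ∏ j, ‖z - ρ j‖ < (η * ε / Real.exp 1) ^ n} ⊆ ⋃ i, ball (c i) (r i) :=
    fun z hz => by_contra fun hz' => (hfar z hz').not_gt (by simpa [dist_eq_norm] using hz)
  refine ⟨⟨m, c, r, hr, mul_assoc 2 η ε ▸ hsum, hS⟩, ?_⟩
  calc volume {z : ℂ | ∏ j, ‖z - ρ j‖ < (η * ε / Real.exp 1) ^ n}
      ≤ ENNReal.ofReal (Real.pi * (∑ i, r i) ^ 2) :=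
        (measure_mono hS).trans (volume_iUnion_ball_le c r hr)
    _ ≤ ENNReal.ofReal (Real.pi * (2 * (η * ε)) ^ 2) := by
        gcongr
        exact sum_nonneg fun i _ => hr i
    _ = ENNReal.ofReal (4 * Real.pi * η ^ 2 * ε ^ 2) := by ring_nf
end
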